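/- Let Φ ∈ k[x][y] be nonzero, g ∈ k[x] nonzero, and w ∈ Γ^n. Then the following four conditions are equivalent: (1) m_w^g(Φ) = 0; (2) deg_w^g Φ = deg_w Φ(g); (3) Φ^{w,g}(g^w) ≠ 0; (4) Φ(g) ≠ 0 and Φ(g)^w = Φ^{w,g}(g^w). -/

import Mathlib

/-!
Write `Φ(g) = ∑ φᵢ gⁱ` and `μ = deg_w^g Φ`. The terms with `deg_w (φᵢ gⁱ) = μ` have leading
forms `φᵢ^w (g^w)ⁱ`, which add up to `Φ^{w,g}(g^w)`, homogeneous of degree `μ`; everything else in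
`Φ(g)` has `w`-degree `< μ`. So `Φ(g) = Φ^{w,g}(g^w) + (terms of degree < μ)`, and (2), (3), (4)
all say that the degree-`μ` part does not cancel. Condition (1) reduces to (2) because the
condition defining `m_w^g(Φ)` always holds at `i = deg_y Φ`, where `∂_y^i Φ` is a constant.
-/

open MvPolynomial Polynomial

set_option synthInstance.maxHeartbeats 1000000
set_option maxHeartbeats 1000000

variable {k : Type*} [Field k] [CharZero k] {n : ℕ}
variable {Γ : Type*} [AddCommGroup Γ] [LinearOrder Γ] [IsOrderedAddMonoid Γ]

/-- The `w`-degree of a multivariate polynomial, with `wdeg w 0 = ⊥ = -∞`. -/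
noncomputable def wdeg (w : Fin n → Γ) (f : MvPolynomial (Fin n) k) : WithBot Γ :=
  f.support.sup fun d => ((∑ i, d i • w i : Γ) : WithBot Γ)

/-- The leading `w`-homogeneous form `f^w` of `f`. -/
noncomputable def lform (w : Fin n → Γ) (f : MvPolynomial (Fin n) k) :
    MvPolynomial (Fin n) k :=
  letI : DecidableEq (WithBot Γ) := Classical.decEq _
  ∑ d ∈ f.support.filter
      (fun d => ((∑ i, d i • w i : Γ) : WithBot Γ) = wdeg w f),
    MvPolynomial.monomial d (f.coeff d)

/-- `deg_w^g Φ = max_i deg_w (φ_i g^i)` for `Φ = Σ_i φ_i y^i`. -/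
noncomputable def wdegG (w : Fin n → Γ) (g : MvPolynomial (Fin n) k)
    (Φ : Polynomial (MvPolynomial (Fin n) k)) : WithBot Γ :=
  Φ.support.sup fun i => wdeg w (Φ.coeff i * g ^ i)

/-- The leading form `Φ^{w,g}` of `Φ` for the grading in which `x_j` has weight `w_j`
and `y` has weight `deg_w g`: the sum of `φ_i^w y^i` over those `i` with
`deg_w (φ_i g^i) = deg_w^g Φ`. -/
noncomputable def pLform (w : Fin n → Γ) (g : MvPolynomial (Fin n) k)
    (Φ : Polynomial (MvPolynomial (Fin n) k)) : Polynomial (MvPolynomial (Fin n) k) :=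
  letI : DecidableEq (WithBot Γ) := Classical.decEq _
  ∑ i ∈ Φ.support.filter (fun i => wdeg w (Φ.coeff i * g ^ i) = wdegG w g Φ),
    Polynomial.C (lform w (Φ.coeff i)) * Polynomial.X ^ i

/-- `m_w^g(Φ) = min { i : deg_w^g (∂_y^i Φ) = deg_w ((∂_y^i Φ)(g)) }`. -/
noncomputable def mwg (w : Fin n → Γ) (g : MvPolynomial (Fin n) k)
    (Φ : Polynomial (MvPolynomial (Fin n) k)) : ℕ :=
  sInf {i : ℕ |
    wdegG w g (Polynomial.derivative^[i] Φ) = wdeg w ((Polynomial.derivative^[i] Φ).eval g)}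

/-- The `w`-degree of the differential form `dh_1 ∧ ⋯ ∧ dh_s`: the maximum over all
`s`-tuples of indices of the `w`-degree of the corresponding `s × s` Jacobian minor
plus the sum of the corresponding weights (noninjective tuples contribute `⊥`). -/
noncomputable def wedgeDeg (w : Fin n → Γ) {s : ℕ} (h : Fin s → MvPolynomial (Fin n) k) :
    WithBot Γ :=
  Finset.univ.sup fun e : Fin s → Fin n =>
    wdeg w (Matrix.det (Matrix.of fun a b : Fin s => MvPolynomial.pderiv (e b) (h a)))
      + ((∑ b, w (e b) : Γ) : WithBot Γ)

/-- The initial algebra `A^w`: the `k`-subalgebra generated by `f^w` for `f ∈ A \ {0}`. -/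
noncomputable def initAlg (w : Fin n → Γ) (A : Subalgebra k (MvPolynomial (Fin n) k)) :
    Subalgebra k (MvPolynomial (Fin n) k) :=
  Algebra.adjoin k (lform w '' ((A : Set (MvPolynomial (Fin n) k)) \ {0}))

/-- The field of fractions `K^w` of `A^w`, realized as a subfield of the fraction field
of `k[x]`. -/
noncomputable def KW (w : Fin n → Γ) (A : Subalgebra k (MvPolynomial (Fin n) k)) :
    Subfield (FractionRing (MvPolynomial (Fin n) k)) :=
  Subfield.closure
    (algebraMap (MvPolynomial (Fin n) k) (FractionRing (MvPolynomial (Fin n) k)) ''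
      (initAlg w A : Set (MvPolynomial (Fin n) k)))

/-- The field of fractions of a subalgebra `A` of `k[x]`, realized as a subfield of the
fraction field of `k[x]`. -/
noncomputable def fracSub (A : Subalgebra k (MvPolynomial (Fin n) k)) :
    Subfield (FractionRing (MvPolynomial (Fin n) k)) :=
  Subfield.closure
    (algebraMap (MvPolynomial (Fin n) k) (FractionRing (MvPolynomial (Fin n) k)) ''
      (A : Set (MvPolynomial (Fin n) k)))

/-- A polynomial is `w`-homogeneous if all its monomials have the same `w`-degree. -/
def IsWHom (w : Fin n → Γ) (f : MvPolynomial (Fin n) k) : Prop :=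
  ∃ γ : Γ, ∀ d ∈ f.support, (∑ i, d i • w i : Γ) = γ

section WDegree

variable {k : Type*} [Field k] {Γ : Type*} [AddCommGroup Γ] [LinearOrder Γ]
variable {w : Fin n → Γ} {f g S T : MvPolynomial (Fin n) k} {γ δ : Γ}

theorem wdeg_eq_weightedTotalDegree' (w : Fin n → Γ) (f : MvPolynomial (Fin n) k) :
    wdeg w f = weightedTotalDegree' w f := by
  simp only [wdeg, weightedTotalDegree', Finsupp.weight_eq_sum]

theorem wdeg_eq_bot_iff : wdeg w f = ⊥ ↔ f = 0 := by
  rw [wdeg_eq_weightedTotalDegree', weightedTotalDegree'_eq_bot_iff]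

theorem wdeg_ne_bot (hf : f ≠ 0) : wdeg w f ≠ ⊥ :=
  wdeg_eq_bot_iff.not.2 hf

theorem le_wdeg {d : Fin n →₀ ℕ} (hd : f.coeff d ≠ 0) :
    (Finsupp.weight w d : WithBot Γ) ≤ wdeg w f := by
  rw [wdeg_eq_weightedTotalDegree']
  exact Finset.le_sup (f := fun d => (Finsupp.weight w d : WithBot Γ))
    (MvPolynomial.mem_support_iff.2 hd)

theorem wdeg_add_le (f g : MvPolynomial (Fin n) k) : wdeg w (f + g) ≤ wdeg w f ⊔ wdeg w g := by
  classical
  simp only [wdeg_eq_weightedTotalDegree', weightedTotalDegree']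
  exact (Finset.sup_mono MvPolynomial.support_add).trans Finset.sup_union.le

theorem wdeg_sum_le {ι : Type*} (s : Finset ι) (F : ι → MvPolynomial (Fin n) k) :
    wdeg w (∑ i ∈ s, F i) ≤ s.sup fun i => wdeg w (F i) := by
  classical
  simp only [wdeg_eq_weightedTotalDegree', weightedTotalDegree']
  exact (Finset.sup_mono MvPolynomial.support_sum).trans (Finset.sup_biUnion _ _).le

theorem MvPolynomial.IsWeightedHomogeneous.wdeg_le (h : IsWeightedHomogeneous w S γ) :
    wdeg w S ≤ γ := by
  rw [wdeg_eq_weightedTotalDegree']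
  exact Finset.sup_le fun d hd =>
    WithBot.coe_le_coe.2 (h (MvPolynomial.mem_support_iff.1 hd)).le

open Classical in
theorem coeff_lform (w : Fin n → Γ) (f : MvPolynomial (Fin n) k) (d : Fin n →₀ ℕ) :
    (lform w f).coeff d =
      if (Finsupp.weight w d : WithBot Γ) = wdeg w f then f.coeff d else 0 := by
  rw [lform, MvPolynomial.coeff_sum]
  simp only [MvPolynomial.coeff_monomial]
  rw [Finset.sum_ite_eq']
  simp only [Finset.mem_filter, MvPolynomial.mem_support_iff, Finsupp.weight_eq_sum]
  split_ifs <;> tauto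

theorem isWeightedHomogeneous_lform (h : wdeg w f = γ) :
    IsWeightedHomogeneous w (lform w f) γ := by
  intro d hd
  rw [coeff_lform] at hd
  split_ifs at hd with hdeg
  · exact WithBot.coe_injective (hdeg.trans h)
  · exact absurd rfl hd

theorem lform_ne_zero (hf : f ≠ 0) : lform w f ≠ 0 := by
  obtain ⟨d, hd, hsup⟩ := Finset.exists_mem_eq_sup f.support
    (MvPolynomial.support_nonempty.2 hf) fun d => (Finsupp.weight w d : WithBot Γ)
  have htop : (Finsupp.weight w d : WithBot Γ) = wdeg w f := by
    rw [wdeg_eq_weightedTotalDegree', weightedTotalDegree', hsup]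
  refine MvPolynomial.ne_zero_iff.2 ⟨d, ?_⟩
  rw [coeff_lform, if_pos htop]
  exact MvPolynomial.mem_support_iff.1 hd

theorem wdeg_sub_lform_lt (hf : f ≠ 0) : wdeg w (f - lform w f) < wdeg w f := by
  obtain ⟨γ, hγ⟩ := WithBot.ne_bot_iff_exists.1 (wdeg_ne_bot (w := w) hf)
  rw [wdeg_eq_weightedTotalDegree' w (f - _), weightedTotalDegree', ← hγ,
    Finset.sup_lt_iff (WithBot.bot_lt_coe γ)]
  intro d hd
  rw [MvPolynomial.mem_support_iff, MvPolynomial.coeff_sub, coeff_lform] at hd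
  split_ifs at hd with hdeg
  · exact absurd (sub_self _) hd
  · rw [sub_zero] at hd
    exact hγ ▸ lt_of_le_of_ne (le_wdeg hd) hdeg

/-- `S` is the `w`-homogeneous component of degree `γ` of `f`, and `f` has no terms of higher
degree. `S = 0` is allowed: it means `deg_w f < γ`. -/
def IsLeadingPart (w : Fin n → Γ) (γ : Γ) (f S : MvPolynomial (Fin n) k) : Prop :=
  IsWeightedHomogeneous w S γ ∧ wdeg w (f - S) < γ

theorem isLeadingPart_lform (h : wdeg w f = γ) : IsLeadingPart w γ f (lform w f) := by
  have hf : f ≠ 0 := by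
    rintro rfl
    exact WithBot.bot_ne_coe ((wdeg_eq_bot_iff.2 rfl).symm.trans h)
  exact ⟨isWeightedHomogeneous_lform h, h ▸ wdeg_sub_lform_lt hf⟩

theorem isLeadingPart_zero (h : wdeg w f < γ) : IsLeadingPart w γ f 0 :=
  ⟨isWeightedHomogeneous_zero _ _ _, by rwa [sub_zero]⟩

theorem isLeadingPart_one : IsLeadingPart w 0 (1 : MvPolynomial (Fin n) k) 1 :=
  ⟨isWeightedHomogeneous_one _ w, by simp [wdeg_eq_bot_iff.2]⟩

namespace IsLeadingPart

theorem wdeg_le (h : IsLeadingPart w γ f S) : wdeg w f ≤ γ := by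
  simpa using (wdeg_add_le S (f - S)).trans (sup_le h.1.wdeg_le h.2.le)

theorem coeff_eq (h : IsLeadingPart w γ f S) {d : Fin n →₀ ℕ} (hd : Finsupp.weight w d = γ) :
    f.coeff d = S.coeff d := by
  rw [← sub_eq_zero, ← MvPolynomial.coeff_sub]
  by_contra hne
  exact (hd ▸ le_wdeg hne).not_gt h.2

theorem wdeg_eq (h : IsLeadingPart w γ f S) (hS : S ≠ 0) : wdeg w f = γ := by
  obtain ⟨d, hd⟩ := MvPolynomial.exists_coeff_ne_zero hS
  refine h.wdeg_le.antisymm ?_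
  rw [← h.1 hd]
  exact le_wdeg (h.coeff_eq (h.1 hd) ▸ hd)

theorem lform_eq (h : IsLeadingPart w γ f S) (hS : S ≠ 0) : lform w f = S := by
  ext d
  rw [coeff_lform, h.wdeg_eq hS]
  split_ifs with hd
  · exact h.coeff_eq (WithBot.coe_inj.1 hd)
  · exact (h.1.coeff_eq_zero d (mt (congrArg _) hd)).symm

theorem wdeg_eq_iff (h : IsLeadingPart w γ f S) : wdeg w f = γ ↔ S ≠ 0 := by
  refine ⟨fun hf hS => ?_, h.wdeg_eq⟩
  have hlt := h.2
  rw [hS, sub_zero, hf] at hlt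
  exact lt_irrefl _ hlt

theorem ne_zero_and_lform_eq_iff (h : IsLeadingPart w γ f S) :
    (f ≠ 0 ∧ lform w f = S) ↔ S ≠ 0 := by
  refine ⟨fun ⟨hf, hl⟩ => hl ▸ lform_ne_zero hf, fun hS => ⟨fun hf => ?_, h.lform_eq hS⟩⟩
  have hdeg := h.wdeg_eq hS
  rw [hf, wdeg_eq_bot_iff.2 rfl] at hdeg
  exact WithBot.bot_ne_coe hdeg

theorem sum {ι : Type*} {s : Finset ι} {F G : ι → MvPolynomial (Fin n) k}
    (h : ∀ i ∈ s, IsLeadingPart w γ (F i) (G i)) :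
    IsLeadingPart w γ (∑ i ∈ s, F i) (∑ i ∈ s, G i) := by
  refine ⟨IsWeightedHomogeneous.sum _ _ _ fun i hi => (h i hi).1, ?_⟩
  rw [← Finset.sum_sub_distrib]
  exact (wdeg_sum_le _ _).trans_lt
    ((Finset.sup_lt_iff (WithBot.bot_lt_coe γ)).2 fun i hi => (h i hi).2)

end IsLeadingPart

variable [IsOrderedAddMonoid Γ]

theorem WithBot.add_lt_coe_add_coe {a b : WithBot Γ} (ha : a ≤ γ) (hb : b < δ) :
    a + b < ↑(γ + δ) := by
  induction a with
  | bot => exact WithBot.bot_lt_coe _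
  | coe a => exact WithBot.coe_add γ δ ▸ WithBot.add_lt_add_of_le_of_lt WithBot.coe_ne_bot ha hb

theorem wdeg_mul_le (f g : MvPolynomial (Fin n) k) : wdeg w (f * g) ≤ wdeg w f + wdeg w g := by
  classical
  rw [wdeg_eq_weightedTotalDegree' w (f * g)]
  refine Finset.sup_le fun d hd => ?_
  obtain ⟨a, ha, b, hb, rfl⟩ := Finset.mem_add.1 (MvPolynomial.support_mul f g hd)
  rw [map_add, WithBot.coe_add]
  exact add_le_add (le_wdeg (MvPolynomial.mem_support_iff.1 ha))
    (le_wdeg (MvPolynomial.mem_support_iff.1 hb))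

theorem IsLeadingPart.mul (hf : IsLeadingPart w γ f S) (hg : IsLeadingPart w δ g T) :
    IsLeadingPart w (γ + δ) (f * g) (S * T) := by
  refine ⟨hf.1.mul hg.1, ?_⟩
  have hsplit : f * g - S * T = S * (g - T) + (f - S) * g := by ring
  rw [hsplit]
  refine (wdeg_add_le _ _).trans_lt (max_lt ?_ ?_)
  · exact (wdeg_mul_le _ _).trans_lt (WithBot.add_lt_coe_add_coe hf.1.wdeg_le hg.2)
  · rw [add_comm γ, mul_comm]
    exact (wdeg_mul_le _ _).trans_lt (WithBot.add_lt_coe_add_coe hg.wdeg_le hf.2)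

theorem lform_mul (hf : f ≠ 0) (hg : g ≠ 0) : lform w (f * g) = lform w f * lform w g := by
  obtain ⟨γ, hγ⟩ := WithBot.ne_bot_iff_exists.1 (wdeg_ne_bot (w := w) hf)
  obtain ⟨δ, hδ⟩ := WithBot.ne_bot_iff_exists.1 (wdeg_ne_bot (w := w) hg)
  exact ((isLeadingPart_lform hγ.symm).mul (isLeadingPart_lform hδ.symm)).lform_eq
    (mul_ne_zero (lform_ne_zero hf) (lform_ne_zero hg))

theorem lform_pow (hg : g ≠ 0) (i : ℕ) : lform w (g ^ i) = lform w g ^ i := by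
  induction i with
  | zero => exact isLeadingPart_one.lform_eq one_ne_zero
  | succ i ih => rw [pow_succ, lform_mul (pow_ne_zero i hg) hg, ih, pow_succ]

end WDegree

section Substitution

variable {k : Type*} [Field k] {Γ : Type*} [AddCommGroup Γ] [LinearOrder Γ]
variable {w : Fin n → Γ} {g : MvPolynomial (Fin n) k} {Φ : Polynomial (MvPolynomial (Fin n) k)}

theorem wdegG_C (w : Fin n → Γ) (g c : MvPolynomial (Fin n) k) :
    wdegG w g (Polynomial.C c) = wdeg w c := by
  by_cases hc : c = 0
  · simp [hc, wdegG, wdeg_eq_bot_iff.2]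
  · rw [wdegG, support_C hc, Finset.sup_singleton, coeff_C_zero, pow_zero, mul_one]

theorem mwg_eq_zero_iff (w : Fin n → Γ) (g : MvPolynomial (Fin n) k)
    (Φ : Polynomial (MvPolynomial (Fin n) k)) :
    mwg w g Φ = 0 ↔ wdegG w g Φ = wdeg w (Φ.eval g) := by
  have hmem : Φ.natDegree ∈ {i : ℕ | wdegG w g (derivative^[i] Φ) =
      wdeg w ((derivative^[i] Φ).eval g)} := by
    have hC := eq_C_of_natDegree_eq_zero (p := derivative^[Φ.natDegree] Φ)
      (by simpa using natDegree_iterate_derivative Φ Φ.natDegree)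
    rw [Set.mem_ofPred_eq, hC, Polynomial.eval_C, wdegG_C]
  rw [mwg, Nat.sInf_eq_zero, or_iff_left (Set.nonempty_of_mem hmem).ne_empty]
  simp

theorem wdegG_ne_bot (hΦ : Φ ≠ 0) (hg : g ≠ 0) : wdegG w g Φ ≠ ⊥ := by
  obtain ⟨i, hi⟩ := Polynomial.support_nonempty.2 hΦ
  exact ne_bot_of_le_ne_bot
    (wdeg_ne_bot (mul_ne_zero (Polynomial.mem_support_iff.1 hi) (pow_ne_zero i hg)))
    (Finset.le_sup (f := fun i => wdeg w (Φ.coeff i * g ^ i)) hi)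

variable [IsOrderedAddMonoid Γ]

theorem isLeadingPart_eval_pLform {μ : Γ} (hg : g ≠ 0) (hμ : wdegG w g Φ = μ) :
    IsLeadingPart w μ (Φ.eval g) ((pLform w g Φ).eval (lform w g)) := by
  have hterm : ∀ i ∈ Φ.support, IsLeadingPart w μ (Φ.coeff i * g ^ i)
      (if wdeg w (Φ.coeff i * g ^ i) = wdegG w g Φ then
        lform w (Φ.coeff i) * lform w g ^ i else 0) := by
    intro i hi
    split_ifs with htop
    · rw [← lform_pow hg, ← lform_mul (Polynomial.mem_support_iff.1 hi) (pow_ne_zero i hg)]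
      exact isLeadingPart_lform (htop.trans hμ)
    · exact isLeadingPart_zero (hμ ▸ lt_of_le_of_ne
        (Finset.le_sup (f := fun i => wdeg w (Φ.coeff i * g ^ i)) hi) htop)
  convert IsLeadingPart.sum hterm using 1
  · rw [eval_eq_sum, Polynomial.sum_def]
  · rw [pLform, eval_finsetSum, Finset.sum_filter]
    simp only [Polynomial.eval_mul, Polynomial.eval_C, Polynomial.eval_pow, Polynomial.eval_X]

end Substitution

/-- For nonzero `Φ ∈ k[x][y]`, nonzero `g ∈ k[x]` and `w ∈ Γ^n`, the following are
equivalent: (1) `m_w^g(Φ) = 0`; (2) `deg_w^g Φ = deg_w Φ(g)`; (3) `Φ^{w,g}(g^w) ≠ 0`;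
(4) `Φ(g) ≠ 0` and `Φ(g)^w = Φ^{w,g}(g^w)`. -/
theorem stmt2 (Φ : Polynomial (MvPolynomial (Fin n) k)) (hΦ : Φ ≠ 0)
    (g : MvPolynomial (Fin n) k) (hg : g ≠ 0) (w : Fin n → Γ) :
    (mwg w g Φ = 0 ↔ wdegG w g Φ = wdeg w (Φ.eval g)) ∧
    (mwg w g Φ = 0 ↔ (pLform w g Φ).eval (lform w g) ≠ 0) ∧
    (mwg w g Φ = 0 ↔
      (Φ.eval g ≠ 0 ∧ lform w (Φ.eval g) = (pLform w g Φ).eval (lform w g))) := by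
  obtain ⟨μ, hμ⟩ := WithBot.ne_bot_iff_exists.1 (wdegG_ne_bot hΦ hg (w := w))
  have hlead := isLeadingPart_eval_pLform hg hμ.symm
  rw [mwg_eq_zero_iff, ← hμ, eq_comm, hlead.wdeg_eq_iff, hlead.ne_zero_and_lform_eq_iff]
  exact ⟨Iff.rfl, Iff.rfl, Iff.rfl⟩
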